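/- In the rewrite system obtained by orienting the equations x+e=x, e+x=x, (x+y)+z=x+(y+z), (x+y)·z=y·(x·z), (d·x)·y=x·(y+x), e·x=x, d·e=e, u·x=x·e left-to-right (adding a constant u for the universal-on-empty operator), there is a cyclic rewrite sequence starting from (d·(d+u))·e returning to itself; hence this system is non-terminating. -/

import Mathlib

/-- Ground terms over constants d, e, u with binary operations + (add) and · (app). -/
inductive Tm : Type
  | d : Tm
  | e : Tm
  | u : Tm
  | add : Tm → Tm → Tm
  | app : Tm → Tm → Tm
  deriving DecidableEq

open Tm

/-- Root rewrite steps: the rules of R together with u·x → x·e. -/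
inductive Root : Tm → Tm → Prop
  | addE (x) : Root (add x e) x
  | eAdd (x) : Root (add e x) x
  | assoc (x y z) : Root (add (add x y) z) (add x (add y z))
  | appAdd (x y z) : Root (app (add x y) z) (app y (app x z))
  | appD (x y) : Root (app (app d x) y) (app x (add y x))
  | appE (x) : Root (app e x) x
  | dE : Root (app d e) e
  | uX (x) : Root (app u x) (app x e)

/-- One rewrite step: a root step applied at some subterm position. -/
inductive Step : Tm → Tm → Prop
  | root {t u} : Root t u → Step t u
  | addL {t t' u} : Step t t' → Step (add t u) (add t' u)
  | addR {t u u'} : Step u u' → Step (add t u) (add t u')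
  | appL {t t' u} : Step t t' → Step (app t u) (app t' u)
  | appR {t u u'} : Step u u' → Step (app t u) (app t u')

theorem Relation.TransGen.exists_seq_of_self {α : Type*} {r : α → α → Prop} {a : α}
    (h : TransGen r a a) : ∃ f : ℕ → α, f 0 = a ∧ ∀ n, r (f n) (f (n + 1)) := by
  have next : ∀ x : {x // TransGen r x x}, ∃ y : {y // TransGen r y y}, r x y := by
    rintro ⟨x, hx⟩
    obtain ⟨y, hxy, hyx⟩ := TransGen.head'_iff.mp hx
    exact ⟨⟨y, TransGen.tail' hyx hxy⟩, hxy⟩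
  choose g hg using next
  refine ⟨fun n ↦ (g^[n] ⟨a, h⟩).1, rfl, fun n ↦ ?_⟩
  simpa only [Function.iterate_succ_apply'] using hg (g^[n] ⟨a, h⟩)

theorem transGen_step_cycle :
    Relation.TransGen Step (app (app d (add d u)) e) (app (app d (add d u)) e) :=
  calc Relation.TransGen Step (app (app d (add d u)) e) (app (add d u) (add e (add d u))) :=
        .single (.root (.appD _ _))
    Step _ (app u (app d (add e (add d u)))) := .root (.appAdd _ _ _)
    Step _ (app u (app d (add d u))) := .appR (.appR (.root (.eAdd _)))
    Step _ (app (app d (add d u)) e) := .root (.uX _)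

/-- with the extra rule u·x → x·e, the term (d·(d+u))·e rewrites
in one or more steps back to itself; hence the system is non-terminating. -/
theorem u0_nonterminating :
    Relation.TransGen Step (app (app d (add d u)) e) (app (app d (add d u)) e) ∧
    ∃ f : ℕ → Tm, f 0 = app (app d (add d u)) e ∧ ∀ n : ℕ, Step (f n) (f (n + 1)) :=
  ⟨transGen_step_cycle, transGen_step_cycle.exists_seq_of_self⟩
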